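/- arXiv:0907.0287 — 4 statements merged into one kernel-verified Lean document; each statement's English description precedes it below -/
import Mathlib

section
/- For a partition κ with at most N parts and the generalized Pochhammer symbol [u]_κ^{(α)} = ∏_{j=1}^N Γ(u - (j-1)/α + κ_j)/Γ(u - (j-1)/α), one has the duplication identity [u]_{2κ}^{(1)} = 2^{2|κ|} [u/2]_κ^{(2)} [(u+1)/2]_κ^{(2)}, where 2κ denotes the partition obtained by doubling each part of κ. -/
/-!
Each factor of `[u]_{2κ}^{(1)}` is a ratio `Γ(v + 2k) / Γ(v)` with `v = u - j > 0`. Dividing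
Legendre's duplication formula `Γ(x) Γ(x + 1/2) = 2^{1-2x} √π Γ(2x)` at `x = v/2 + k` by the same
formula at `x = v/2` splits this ratio into `2^{2k}` times the corresponding factors of
`[u/2]_κ^{(2)}` and `[(u+1)/2]_κ^{(2)}`.
-/

open Real

noncomputable section

/-- Generalized Pochhammer symbol `[u]_kappa^{(alpha)}` (Gamma-ratio form),
for a partition with at most `N` parts. -/
def genPochG {N : ℕ} (α u : ℝ) (κ : Fin N → ℕ) : ℝ :=
  ∏ j : Fin N, Real.Gamma (u - (j : ℕ) / α + κ j) / Real.Gamma (u - (j : ℕ) / α)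

theorem Real.Gamma_two_mul_add_div_Gamma_two_mul (x t : ℝ) (hx : Gamma (2 * x) ≠ 0) :
    Gamma (2 * x + 2 * t) / Gamma (2 * x) =
      2 ^ (2 * t) * (Gamma (x + t) / Gamma x) * (Gamma (x + 1 / 2 + t) / Gamma (x + 1 / 2)) := by
  have hpow : (2 : ℝ) ^ (2 * t) * 2 ^ (1 - 2 * (x + t)) = 2 ^ (1 - 2 * x) := by
    rw [← rpow_add two_pos]; ring_nf
  rw [mul_assoc, div_mul_div_comm, add_right_comm, Gamma_mul_Gamma_add_half,
    Gamma_mul_Gamma_add_half]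
  field_simp
  rw [mul_assoc, hpow]

theorem Real.Gamma_add_two_mul_nat_div_Gamma (v : ℝ) (hv : Gamma v ≠ 0) (k : ℕ) :
    Gamma (v + 2 * k) / Gamma v =
      2 ^ (2 * k) * (Gamma (v / 2 + k) / Gamma (v / 2)) *
        (Gamma ((v + 1) / 2 + k) / Gamma ((v + 1) / 2)) := by
  have h := Gamma_two_mul_add_div_Gamma_two_mul (v / 2) k (by rwa [mul_div_cancel₀ v two_ne_zero])
  rw [mul_div_cancel₀ v two_ne_zero] at h
  rw [add_div, h]
  norm_cast

theorem pochhammer_duplication_general (N : ℕ) (κ : Fin N → ℕ)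
    (u : ℝ) (hu : ∀ j : Fin N, (j : ℝ) < u) :
    genPochG 1 u (fun i => 2 * κ i) =
      2 ^ (2 * ∑ i, κ i) * genPochG 2 (u / 2) κ * genPochG 2 ((u + 1) / 2) κ := by
  rw [genPochG, genPochG, genPochG, Finset.mul_sum, ← Finset.prod_pow_eq_pow_sum,
    ← Finset.prod_mul_distrib, ← Finset.prod_mul_distrib]
  refine Finset.prod_congr rfl fun j _ => ?_
  have hpos : 0 < u - j := sub_pos.mpr (hu j)
  convert Gamma_add_two_mul_nat_div_Gamma (u - j) (Gamma_pos_of_pos hpos).ne' (κ j) using 3 <;>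
    push_cast <;> ring_nf

/-- duplication identity for the generalized Pochhammer symbol:
`[u]_{2kappa}^{(1)} = 2^{2|kappa|} [u/2]_kappa^{(2)} [(u+1)/2]_kappa^{(2)}`. -/
theorem pochhammer_duplication (N : ℕ) (κ : Fin N → ℕ) (hκ : Antitone κ)
    (u : ℝ) (hu : ∀ j : Fin N, (j : ℝ) < u) :
    genPochG 1 u (fun i => 2 * κ i) =
      2 ^ (2 * ∑ i, κ i) * genPochG 2 (u / 2) κ * genPochG 2 ((u + 1) / 2) κ :=
  pochhammer_duplication_general N κ u hu

end
end

section
/- The power sum symmetric polynomial p_k(x_1,...,x_N) = Σ_{j=1}^N x_j^k equals the alternating sum of hook Schur polynomials: p_k = Σ_{l=0}^{k-1} (-1)^l s_{(k-l,1^l)}, where (k-l,1^l) denotes the hook partition with arm k-l and l parts equal to 1. -/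
open MeasureTheory Matrix
open scoped BigOperators

attribute [local instance] Classical.propDecidable

noncomputable section

/-- Schur polynomial via the bialternant (ratio of determinants) formula (3.0). -/
def schurV {N : ℕ} (κ : Fin N → ℕ) (x : Fin N → ℂ) : ℂ :=
  Matrix.det (Matrix.of fun i j : Fin N => x i ^ (κ j + (N - 1 - (j : ℕ)))) /
  Matrix.det (Matrix.of fun i j : Fin N => x i ^ (N - 1 - (j : ℕ)))

/-- The hook partition `(k - l, 1^l)` with at most `N` parts. -/
def hookP (N k l : ℕ) : Fin N → ℕ :=
  fun i => if (i : ℕ) = 0 then k - l else if (i : ℕ) ≤ l then 1 else 0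

/-!
Multiply both sides by the Vandermonde determinant `a_δ`, `δ = (N - 1, …, 0)`. By Muir's rule
`p_k a_δ = ∑ⱼ a_{δ + k eⱼ}`. For `j ≥ k` the raised exponent `δⱼ + k = δ_{j-k}` repeats a column,
so the term vanishes; for `j < k` the cycle moving column `j` to the front sorts the exponents
into `(k - j, 1^j) + δ` at the cost of the sign `(-1)^j`.
-/

namespace Matrix

variable {R : Type*} [CommRing R] {n : Type*} [Fintype n] [DecidableEq n]

def alternant (x : n → R) (e : n → ℕ) : R :=
  (of fun i j => x i ^ e j).det

theorem alternant_comp_perm (x : n → R) (e : n → ℕ) (σ : Equiv.Perm n) :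
    alternant x (e ∘ σ) = Equiv.Perm.sign σ * alternant x e := by
  simpa [alternant, submatrix] using det_permute' σ (of fun i j => x i ^ e j)

theorem alternant_eq_zero_of_eq {x : n → R} {e : n → ℕ} {i j : n} (hij : i ≠ j)
    (he : e i = e j) : alternant x e = 0 :=
  det_zero_of_column_eq hij fun _ => by simp [he]

theorem powerSum_mul_alternant (x : n → R) (k : ℕ) (e : n → ℕ) :
    (∑ m, x m ^ k) * alternant x e = ∑ j, alternant x (Function.update e j (e j + k)) := by
  simp only [alternant, det_apply', of_apply, Finset.mul_sum]
  rw [Finset.sum_comm]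
  refine Finset.sum_congr rfl fun σ _ => ?_
  rw [← Equiv.sum_comp σ fun m => x m ^ k, Finset.sum_mul]
  refine Finset.sum_congr rfl fun j _ => ?_
  have hraise : ∀ i, x (σ i) ^ Function.update e j (e j + k) i
      = x (σ i) ^ e i * if i = j then x (σ i) ^ k else 1 := by
    intro i
    rcases eq_or_ne i j with rfl | h
    · simp [pow_add]
    · simp [h]
  simp only [hraise, Finset.prod_mul_distrib, Finset.prod_ite_eq', Finset.mem_univ, if_true]
  ring

end Matrix

def staircase (N : ℕ) : Fin N → ℕ := fun j => N - 1 - (j : ℕ)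

theorem schurV_eq_div {N : ℕ} (κ : Fin N → ℕ) (x : Fin N → ℂ) :
    schurV κ x = alternant x (κ + staircase N) / alternant x (staircase N) := rfl

theorem alternant_staircase_ne_zero {R : Type*} [CommRing R] [IsDomain R] {N : ℕ}
    {x : Fin N → R} (hx : Function.Injective x) : alternant x (staircase N) ≠ 0 := by
  have hrev : staircase N = (fun j : Fin N => (j : ℕ)) ∘ Fin.revPerm := by
    funext j
    simp only [staircase, Function.comp_apply, Fin.revPerm_apply, Fin.val_rev]
    omega
  rw [hrev, alternant_comp_perm]
  refine mul_ne_zero ?_ (det_vandermonde_ne_zero_iff.mpr hx)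
  rcases Int.units_eq_one_or (Equiv.Perm.sign (Fin.revPerm : Equiv.Perm (Fin N))) with h | h <;>
    simp [h]

theorem update_staircase_eq_comp_cycleRange {N k : ℕ} {j : Fin N} (hjk : (j : ℕ) < k) :
    Function.update (staircase N) j (staircase N j + k)
      = (hookP N k j + staircase N) ∘ Fin.cycleRange j := by
  have := j.neZero
  funext i
  simp only [Function.comp_apply, Pi.add_apply, hookP]
  rcases lt_trichotomy i j with h | rfl | h
  · have hij : (i : ℕ) < j := h
    have hi : ((i + 1 : Fin N) : ℕ) = i + 1 := Fin.val_add_one_of_lt' (by omega)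
    rw [Function.update_of_ne h.ne, Fin.cycleRange_of_lt h, hi, if_neg (by omega),
      if_pos (by omega)]
    simp only [staircase, hi]
    omega
  · rw [Function.update_self, Fin.cycleRange_self]
    simp only [Fin.val_zero, if_true, staircase]
    omega
  · have hji : (j : ℕ) < i := h
    rw [Function.update_of_ne h.ne', Fin.cycleRange_of_gt h, if_neg (by omega), if_neg (by omega)]
    simp only [staircase]
    omega

theorem alternant_update_staircase {R : Type*} [CommRing R] {N k : ℕ} (hk : 1 ≤ k)
    (x : Fin N → R) (j : Fin N) :
    alternant x (Function.update (staircase N) j (staircase N j + k))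
      = if (j : ℕ) < k then (-1) ^ (j : ℕ) * alternant x (hookP N k j + staircase N) else 0 := by
  split_ifs with hjk
  · rw [update_staircase_eq_comp_cycleRange hjk, alternant_comp_perm, Fin.sign_cycleRange]
    simp
  · -- the raised exponent `N - 1 - j + k` already sits in column `j - k`
    refine alternant_eq_zero_of_eq (i := ⟨j - k, by omega⟩) (j := j) (Fin.ne_of_val_ne ?_) ?_
    · simp only
      omega
    · rw [Function.update_of_ne (Fin.ne_of_val_ne (by simp only; omega)), Function.update_self]
      simp only [staircase]
      omega

theorem sum_fin_ite_lt_eq_sum_range_ite_lt {M : Type*} [AddCommMonoid M] (N k : ℕ) (f : ℕ → M) :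
    ∑ j : Fin N, (if (j : ℕ) < k then f j else 0)
      = ∑ l ∈ Finset.range k, if l < N then f l else 0 := by
  simp only [Fin.sum_univ_eq_sum_range (fun j => if j < k then f j else 0), Finset.sum_ite,
    Finset.sum_const_zero, add_zero]
  congr 1
  ext l
  simp [and_comm]

/-- `p_k = sum_{l=0}^{k-1} (-1)^l s_{(k-l,1^l)}`, where Schur polynomials
indexed by hooks with more than `N` parts are zero. -/
theorem powerSum_eq_alternating_hook_schur (N k : ℕ) (hk : 1 ≤ k)
    (x : Fin N → ℂ) (hx : Function.Injective x) :
    ∑ j, x j ^ k =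
      ∑ l ∈ Finset.range k, if l < N then (-1 : ℂ) ^ l * schurV (hookP N k l) x else 0 := by
  rw [← sum_fin_ite_lt_eq_sum_range_ite_lt]
  have hV := alternant_staircase_ne_zero hx
  refine mul_right_cancel₀ hV ?_
  rw [powerSum_mul_alternant, Finset.sum_mul]
  refine Finset.sum_congr rfl fun j _ => ?_
  rw [alternant_update_staircase hk, ite_mul, zero_mul, schurV_eq_div, mul_assoc,
    div_mul_cancel₀ _ hV]

end
end

section
/- Conjugation formula for the generalized Pochhammer symbol: for any partition κ and its conjugate κ', [u]_{κ'}^{(α)} = (-α)^{-|κ|} [-αu]_κ^{(1/α)}. -/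
/-!
Both sides are products over the cells `(i, j)`, `j < κ i`, of the Young diagram of `κ`: the
left side reads them column by column, the right side row by row. Since `κ` is antitone, the
length `κ' j` of column `j` counts exactly the rows `i` with `j < κ i`, and on each cell the
factor `-αu - i/(1/α) + j` of the right side is `-α` times the factor `u - j/α + i` of the left.
-/

open MeasureTheory Matrix
open scoped BigOperators

attribute [local instance] Classical.propDecidable

noncomputable section

/-- Generalized Pochhammer symbol `[u]_kappa^{(alpha)}` (product form). -/
def genPochP {N : ℕ} (α u : ℝ) (κ : Fin N → ℕ) : ℝ :=
  ∏ j : Fin N, ∏ i ∈ Finset.range (κ j), (u - (j : ℕ) / α + i)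

/-- The conjugate (transpose) partition, recorded with `N` parts. -/
def conjP {M N : ℕ} (κ : Fin M → ℕ) : Fin N → ℕ :=
  fun j => (Finset.univ.filter fun i : Fin M => (j : ℕ) < κ i).card

section

open Finset

theorem lt_card_filter_iff_of_antitone {N : ℕ} {P : Fin N → Prop} [DecidablePred P]
    (hP : Antitone P) (i : Fin N) : (i : ℕ) < #(univ.filter P) ↔ P i := by
  constructor
  · intro hlt
    by_contra hi
    have hsub : univ.filter P ⊆ Iio i := fun l hl => by
      rw [mem_Iio]
      by_contra hil
      exact hi (hP (not_lt.1 hil) (mem_filter.1 hl).2)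
    have := card_le_card hsub
    rw [Fin.card_Iio] at this
    omega
  · intro hi
    have hsub : Iic i ⊆ univ.filter P :=
      fun l hl => mem_filter.2 ⟨mem_univ l, hP (mem_Iic.1 hl) hi⟩
    have := card_le_card hsub
    rw [Fin.card_Iic] at this
    omega

theorem prod_range_eq_prod_fin_ite {β : Type*} [CommMonoid β] {k n : ℕ} (hkn : k ≤ n)
    (g : ℕ → β) : ∏ j ∈ range k, g j = ∏ j : Fin n, if (j : ℕ) < k then g j else 1 := by
  rw [Fin.prod_univ_eq_prod_range (fun j => if j < k then g j else 1), ← prod_filter]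
  congr 1
  ext j
  simp only [mem_range, mem_filter]
  omega

theorem prod_prod_range_conjP {β : Type*} [CommMonoid β] {N M : ℕ} (κ : Fin N → ℕ)
    (hκ : Antitone κ) (hM : ∀ i, κ i ≤ M) (f : ℕ → ℕ → β) :
    ∏ j : Fin M, ∏ i ∈ range (conjP κ j), f i j = ∏ i : Fin N, ∏ j ∈ range (κ i), f i j := by
  calc ∏ j : Fin M, ∏ i ∈ range (conjP κ j), f i j
      = ∏ j : Fin M, ∏ i : Fin N, if (i : ℕ) < conjP κ j then f i j else 1 :=
        prod_congr rfl fun j _ =>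
          prod_range_eq_prod_fin_ite ((card_filter_le _ _).trans_eq (card_fin N)) _
    _ = ∏ j : Fin M, ∏ i : Fin N, if (j : ℕ) < κ i then f i j else 1 := by
        refine prod_congr rfl fun j _ => prod_congr rfl fun i _ => ?_
        have hreach : Antitone fun l => (j : ℕ) < κ l := fun a b hab h => h.trans_le (hκ hab)
        simp only [conjP, lt_card_filter_iff_of_antitone hreach]
    _ = ∏ i : Fin N, ∏ j : Fin M, if (j : ℕ) < κ i then f i j else 1 := prod_comm
    _ = ∏ i : Fin N, ∏ j ∈ range (κ i), f i j :=
        prod_congr rfl fun i _ => (prod_range_eq_prod_fin_ite (hM i) _).symm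

theorem prod_prod_range_const_mul {ι β : Type*} [CommMonoid β] (s : Finset ι) (k : ι → ℕ)
    (c : β) (g : ι → ℕ → β) :
    ∏ i ∈ s, ∏ j ∈ range (k i), c * g i j =
      c ^ (∑ i ∈ s, k i) * ∏ i ∈ s, ∏ j ∈ range (k i), g i j := by
  simp only [prod_mul_distrib, prod_const, card_range, prod_pow_eq_pow_sum]

end

/-- conjugation formula
`[u]_{kappa'}^{(alpha)} = (-alpha)^{-|kappa|} [-alpha u]_kappa^{(1/alpha)}`. -/
theorem pochhammer_conjugation (N M : ℕ) (α : ℝ) (hα : α ≠ 0)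
    (κ : Fin N → ℕ) (hκ : Antitone κ) (hM : ∀ i, κ i ≤ M) (u : ℝ) :
    genPochP (N := M) α u (conjP κ) =
      ((-α) ^ (∑ i, κ i))⁻¹ * genPochP (1 / α) (-(α * u)) κ := by
  have hcell (i j : ℕ) : -(α * u) - (i : ℝ) / (1 / α) + j = -α * (u - j / α + i) := by
    field_simp
    ring
  calc genPochP (N := M) α u (conjP κ)
      = ∏ i : Fin N, ∏ j ∈ Finset.range (κ i), (u - (j : ℝ) / α + (i : ℕ)) :=
        prod_prod_range_conjP κ hκ hM fun i j => u - (j : ℝ) / α + i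
    _ = ((-α) ^ (∑ i, κ i))⁻¹ *
          ∏ i : Fin N, ∏ j ∈ Finset.range (κ i), -α * (u - (j : ℝ) / α + (i : ℕ)) := by
        rw [prod_prod_range_const_mul, inv_mul_cancel_left₀ (pow_ne_zero _ (neg_ne_zero.2 hα))]
    _ = ((-α) ^ (∑ i, κ i))⁻¹ * genPochP (1 / α) (-(α * u)) κ := by
        simp only [genPochP, hcell]

end
end

section
/- Complementation formula for the generalized Pochhammer symbol: for a partition κ fitting in an N×s box, let κ^c := (s - κ_N, s - κ_{N-1}, ..., s - κ_1) be the complementary partition. Then [u]_{κ^c}^{(α)} = (-1)^{|κ^c|} [(N-1)/α - u + 1 - s]_{s^N}^{(α)} / [(N-1)/α - u + 1 - s]_{κ}^{(α)}, as an identity of rational functions in u. -/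
open MeasureTheory Matrix
open scoped BigOperators

attribute [local instance] Classical.propDecidable

noncomputable section

/-!
The identity factors over rows. In row `j` put `x := u - (N - 1 - j)/α`, the row parameter of
the reversed complement; the three row products are then `∏_{i<s-κ_j} (x + i)`,
`∏_{i<κ_j} (1 - s - x + i)` and `∏_{i<s} (1 - s - x + i)`. Split the last after `κ_j` factors:
read backwards, its remaining `s - κ_j` factors are `-(x + i)` for `i < s - κ_j`.
-/

open Finset

section

variable {R : Type*} [CommRing R]

theorem prod_range_one_sub_sub_add (x : R) (n : ℕ) :
    ∏ i ∈ range n, (1 - n - x + i) = (-1) ^ n * ∏ i ∈ range n, (x + i) := by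
  have reflected := prod_neg (s := range n) fun j => x + ((n - 1 - j : ℕ) : R)
  rw [card_range] at reflected
  rw [← prod_range_reflect (fun i : ℕ => x + (i : R)) n, ← reflected]
  refine prod_congr rfl fun i hi => ?_
  have hi : i + 1 ≤ n := mem_range.1 hi
  rw [show n - 1 - i = n - (i + 1) by omega, Nat.cast_sub hi]
  push_cast
  ring

theorem prod_range_sub_mul_prod_range_one_sub_sub_add (x : R) {k s : ℕ} (hk : k ≤ s) :
    (∏ i ∈ range (s - k), (x + i)) * ∏ i ∈ range k, (1 - s - x + i) =
      (-1) ^ (s - k) * ∏ i ∈ range s, (1 - s - x + i) := by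
  obtain ⟨n, rfl⟩ := Nat.exists_eq_add_of_le hk
  have shift : ∏ i ∈ range n, (1 - ↑(k + n) - x + ↑(k + i)) = ∏ i ∈ range n, (1 - n - x + i) :=
    prod_congr rfl fun i _ => by push_cast; ring
  have sign_sq : ((-1 : R) ^ n) * (-1) ^ n = 1 := by rw [← mul_pow, neg_one_mul, neg_neg, one_pow]
  rw [add_tsub_cancel_left, prod_range_add, shift, prod_range_one_sub_sub_add]
  linear_combination (-(∏ i ∈ range n, (x + i)) * ∏ i ∈ range k, (1 - ↑(k + n) - x + i)) * sign_sq

end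

theorem genPochP_comp_rev {N : ℕ} (α u : ℝ) (κ : Fin N → ℕ) :
    genPochP α u (fun i => κ (Fin.rev i)) =
      ∏ j : Fin N, ∏ i ∈ range (κ j), (u - ((N : ℝ) - 1 - (j : ℕ)) / α + i) := by
  rw [genPochP, ← Equiv.prod_comp Fin.revPerm]
  refine prod_congr rfl fun j _ => ?_
  have hj : (j : ℕ) + 1 ≤ N := j.isLt
  simp only [Fin.revPerm_apply, Fin.rev_rev, Fin.val_rev, Nat.cast_sub hj, Nat.cast_add,
    Nat.cast_one, sub_add_eq_sub_sub_swap]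

theorem pochhammer_complementation_general (N s : ℕ) (α : ℝ)
    (κ : Fin N → ℕ) (hs : ∀ i, κ i ≤ s) (u : ℝ) :
    genPochP α u (fun i => s - κ (Fin.rev i)) *
        genPochP α (((N : ℝ) - 1) / α - u + 1 - s) κ =
      (-1 : ℝ) ^ (∑ i : Fin N, (s - κ i)) *
        genPochP α (((N : ℝ) - 1) / α - u + 1 - s) (fun _ : Fin N => s) := by
  rw [genPochP_comp_rev α u (fun j => s - κ j), genPochP, genPochP, ← prod_pow_eq_pow_sum,
    ← prod_mul_distrib, ← prod_mul_distrib]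
  refine prod_congr rfl fun j _ => ?_
  set x := u - ((N : ℝ) - 1 - (j : ℕ)) / α
  have row_param : ((N : ℝ) - 1) / α - u + 1 - s - (j : ℕ) / α = 1 - s - x := by ring
  simp only [row_param]
  exact prod_range_sub_mul_prod_range_one_sub_sub_add x (hs j)

/-- complementation formula for the generalized Pochhammer symbol,
stated with denominators cleared (an identity of polynomials in `u`). -/
theorem pochhammer_complementation (N s : ℕ) (α : ℝ) (hα : α ≠ 0)
    (κ : Fin N → ℕ) (hκ : Antitone κ) (hs : ∀ i, κ i ≤ s) (u : ℝ) :
    genPochP α u (fun i => s - κ (Fin.rev i)) *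
        genPochP α (((N : ℝ) - 1) / α - u + 1 - s) κ =
      (-1 : ℝ) ^ (∑ i : Fin N, (s - κ i)) *
        genPochP α (((N : ℝ) - 1) / α - u + 1 - s) (fun _ : Fin N => s) :=
  pochhammer_complementation_general N s α κ hs u

end
end
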